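/- arXiv:1401.6097 — 4 statements merged into one kernel-verified Lean document; each statement's English description precedes it below -/
import Mathlib

section
/- Let W and V be binary-input discrete memoryless channels with the same output alphabet. Then I(W⁻, V⁻) + I(W⁺, V⁺) = 2·I(W, V); that is, the mismatched mutual information I(W,V) is preserved on average under the polar transforms. -/
open Finset Real

noncomputable section

/-- Binary symmetric channel with crossover probability `α`: `BSC α x y = W(y|x)`. -/
def BSC (α : ℝ) : Bool → Bool → ℝ := fun x y => if y = x then 1 - α else α

/-- Arıkan's minus polar transform. -/
def Wminus {Y : Type*} (W : Bool → Y → ℝ) : Bool → Y × Y → ℝ :=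
  fun u₁ y => ∑ u₂ : Bool, (1/2) * W (u₁ ^^ u₂) y.1 * W u₂ y.2

/-- Arıkan's plus polar transform; output `(y₁, y₂, u₁)`. -/
def Wplus {Y : Type*} (W : Bool → Y → ℝ) : Bool → Y × Y × Bool → ℝ :=
  fun u₂ y => (1/2) * W (y.2.2 ^^ u₂) y.1 * W u₂ y.2.1

/-- Mismatched information functional `I(W, V)`. -/
def Ifun {Y : Type*} [Fintype Y] (W V : Bool → Y → ℝ) : ℝ :=
  ∑ y : Y, ∑ x : Bool, (1/2) * W x y *
    Real.logb 2 (V x y / ((1/2) * V false y + (1/2) * V true y))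

/-- Output alphabet after applying a sequence of polar transforms
(`true` = plus, `false` = minus, head applied first). -/
def polarType (Y : Type u) : List Bool → Type u
  | [] => Y
  | true :: s => polarType (Y × Y × Bool) s
  | false :: s => polarType (Y × Y) s

/-- The synthesized channel `W^s`. -/
def polarChan {Y : Type*} (W : Bool → Y → ℝ) : (s : List Bool) → Bool → polarType Y s → ℝ
  | [] => W
  | true :: s => polarChan (Wplus W) s
  | false :: s => polarChan (Wminus W) s

instance polarFintype (Y : Type*) [Fintype Y] : ∀ s : List Bool, Fintype (polarType Y s)
  | [] => inferInstanceAs (Fintype Y)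
  | true :: s => polarFintype (Y × Y × Bool) s
  | false :: s => polarFintype (Y × Y) s


private lemma logsum_aux (a b A Q1 Q2 : ℝ) (ha : 0 < a) (hb : 0 < b) (hA : 0 < A)
    (h1 : 0 < Q1) (h2 : 0 < Q2) :
    logb 2 (A / (Q1*Q2)) + logb 2 (((1/2)*a*b)/((1/2)*A)) = logb 2 (a/Q1) + logb 2 (b/Q2) := by
  have h : ((1/2)*a*b)/((1/2)*A) = a*b/A := by
    field_simp
  rw [h, Real.logb_div (by positivity) (by positivity),
      Real.logb_div (by positivity) (by positivity),
      Real.logb_div ha.ne' h1.ne', Real.logb_div hb.ne' h2.ne',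
      Real.logb_mul h1.ne' h2.ne', Real.logb_mul ha.ne' hb.ne']
  ring

/-- `I(W⁻,V⁻) + I(W⁺,V⁺) = 2 I(W,V)`: the mismatched information
functional is preserved on average under the polar transforms. -/
theorem Ifun_polar_conservation {Y : Type*} [Fintype Y] (W V : Bool → Y → ℝ)
    (hW0 : ∀ x y, 0 ≤ W x y) (hW1 : ∀ x, ∑ y, W x y = 1)
    (hV0 : ∀ x y, 0 ≤ V x y) (hV1 : ∀ x, ∑ y, V x y = 1)
    (hpos : ∀ x y, 0 < W x y → 0 < V x y) :
    Ifun (Wminus W) (Wminus V) + Ifun (Wplus W) (Wplus V) = 2 * Ifun W V := by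
  have key : ∀ (y₁ y₂ : Y) (u₁ u₂ : Bool),
      (1/4) * (W (u₁ ^^ u₂) y₁ * W u₂ y₂) *
          logb 2 (Wminus V u₁ (y₁, y₂) /
            (((1/2) * V false y₁ + (1/2) * V true y₁) * ((1/2) * V false y₂ + (1/2) * V true y₂)))
        + (1/4) * (W (u₁ ^^ u₂) y₁ * W u₂ y₂) *
          logb 2 (((1/2) * V (u₁ ^^ u₂) y₁ * V u₂ y₂) / ((1/2) * Wminus V u₁ (y₁, y₂)))
      = (1/4) * (W (u₁ ^^ u₂) y₁ * W u₂ y₂) *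
          (logb 2 (V (u₁ ^^ u₂) y₁ / ((1/2) * V false y₁ + (1/2) * V true y₁))
            + logb 2 (V u₂ y₂ / ((1/2) * V false y₂ + (1/2) * V true y₂))) := by
    intro y₁ y₂ u₁ u₂
    rcases (mul_nonneg (hW0 (u₁ ^^ u₂) y₁) (hW0 u₂ y₂)).lt_or_eq with h | h
    · have hW₁ : 0 < W (u₁ ^^ u₂) y₁ := by
        rcases (hW0 (u₁ ^^ u₂) y₁).lt_or_eq with h1 | h1
        · exact h1
        · exfalso; rw [← h1, zero_mul] at h; exact lt_irrefl 0 h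
      have hW₂ : 0 < W u₂ y₂ := by
        rcases (hW0 u₂ y₂).lt_or_eq with h1 | h1
        · exact h1
        · exfalso; rw [← h1, mul_zero] at h; exact lt_irrefl 0 h
      have ha := hpos _ _ hW₁
      have hb := hpos _ _ hW₂
      have hQ1 : 0 < (1/2) * V false y₁ + (1/2) * V true y₁ := by
        have h0 := hV0 false y₁; have h1 := hV0 true y₁
        cases hx : (u₁ ^^ u₂) <;> rw [hx] at ha <;> linarith
      have hQ2 : 0 < (1/2) * V false y₂ + (1/2) * V true y₂ := by
        have h0 := hV0 false y₂; have h1 := hV0 true y₂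
        cases hx : u₂ <;> rw [hx] at hb <;> linarith
      have hA : 0 < Wminus V u₁ (y₁, y₂) := by
        have hsum : Wminus V u₁ (y₁, y₂) = ∑ u : Bool, (1/2) * V (u₁ ^^ u) y₁ * V u y₂ := rfl
        have hle : (1/2) * V (u₁ ^^ u₂) y₁ * V u₂ y₂
            ≤ ∑ u : Bool, (1/2) * V (u₁ ^^ u) y₁ * V u y₂ :=
          Finset.single_le_sum (f := fun u : Bool => (1/2) * V (u₁ ^^ u) y₁ * V u y₂)
            (fun i _ => mul_nonneg (mul_nonneg (by norm_num) (hV0 _ _)) (hV0 _ _))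
            (Finset.mem_univ u₂)
        rw [hsum]
        nlinarith
      have hkey := logsum_aux (V (u₁ ^^ u₂) y₁) (V u₂ y₂) (Wminus V u₁ (y₁, y₂)) _ _ ha hb hA hQ1 hQ2
      calc (1/4) * (W (u₁ ^^ u₂) y₁ * W u₂ y₂) *
              logb 2 (Wminus V u₁ (y₁, y₂) /
                (((1/2) * V false y₁ + (1/2) * V true y₁) * ((1/2) * V false y₂ + (1/2) * V true y₂)))
            + (1/4) * (W (u₁ ^^ u₂) y₁ * W u₂ y₂) *
              logb 2 (((1/2) * V (u₁ ^^ u₂) y₁ * V u₂ y₂) / ((1/2) * Wminus V u₁ (y₁, y₂)))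
          = (1/4) * (W (u₁ ^^ u₂) y₁ * W u₂ y₂) *
              (logb 2 (Wminus V u₁ (y₁, y₂) /
                (((1/2) * V false y₁ + (1/2) * V true y₁) * ((1/2) * V false y₂ + (1/2) * V true y₂)))
               + logb 2 (((1/2) * V (u₁ ^^ u₂) y₁ * V u₂ y₂) / ((1/2) * Wminus V u₁ (y₁, y₂)))) := by
            ring
        _ = _ := by rw [hkey]
    · rw [← h]; ring
  have step12 : Ifun (Wminus W) (Wminus V) + Ifun (Wplus W) (Wplus V)
      = ∑ y₁ : Y, ∑ y₂ : Y, ∑ u₁ : Bool, ∑ u₂ : Bool,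
          (1/4) * (W (u₁ ^^ u₂) y₁ * W u₂ y₂) *
            (logb 2 (V (u₁ ^^ u₂) y₁ / ((1/2) * V false y₁ + (1/2) * V true y₁))
              + logb 2 (V u₂ y₂ / ((1/2) * V false y₂ + (1/2) * V true y₂))) := by
    simp only [Ifun, Fintype.sum_prod_type]
    rw [← Finset.sum_add_distrib]
    refine Finset.sum_congr rfl fun y₁ _ => ?_
    rw [← Finset.sum_add_distrib]
    refine Finset.sum_congr rfl fun y₂ _ => ?_
    have hqm : (1/2) * Wminus V false (y₁, y₂) + (1/2) * Wminus V true (y₁, y₂)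
        = ((1/2) * V false y₁ + (1/2) * V true y₁) * ((1/2) * V false y₂ + (1/2) * V true y₂) := by
      simp [Wminus, Fintype.sum_bool]
      ring
    have hqp : ∀ u₁ : Bool, (1/2) * Wplus V false (y₁, y₂, u₁) + (1/2) * Wplus V true (y₁, y₂, u₁)
        = (1/2) * Wminus V u₁ (y₁, y₂) := by
      intro u₁
      simp [Wplus, Wminus, Fintype.sum_bool]
      ring
    calc (∑ x : Bool, (1/2) * Wminus W x (y₁, y₂) *
            logb 2 (Wminus V x (y₁, y₂) /
              ((1/2) * Wminus V false (y₁, y₂) + (1/2) * Wminus V true (y₁, y₂))))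
        + ∑ u₁ : Bool, ∑ x : Bool, (1/2) * Wplus W x (y₁, y₂, u₁) *
            logb 2 (Wplus V x (y₁, y₂, u₁) /
              ((1/2) * Wplus V false (y₁, y₂, u₁) + (1/2) * Wplus V true (y₁, y₂, u₁)))
        = (∑ u₁ : Bool, ∑ u₂ : Bool, (1/4) * (W (u₁ ^^ u₂) y₁ * W u₂ y₂) *
            logb 2 (Wminus V u₁ (y₁, y₂) /
              (((1/2) * V false y₁ + (1/2) * V true y₁) * ((1/2) * V false y₂ + (1/2) * V true y₂))))
          + ∑ u₁ : Bool, ∑ u₂ : Bool, (1/4) * (W (u₁ ^^ u₂) y₁ * W u₂ y₂) *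
            logb 2 (((1/2) * V (u₁ ^^ u₂) y₁ * V u₂ y₂) / ((1/2) * Wminus V u₁ (y₁, y₂))) := by
          congr 1
          · rw [hqm]
            refine Finset.sum_congr rfl fun u₁ _ => ?_
            show (1/2) * (∑ u₂ : Bool, (1/2) * W (u₁ ^^ u₂) y₁ * W u₂ y₂) *
                logb 2 (Wminus V u₁ (y₁, y₂) /
                  (((1/2) * V false y₁ + (1/2) * V true y₁) *
                    ((1/2) * V false y₂ + (1/2) * V true y₂))) = _
            rw [Finset.mul_sum, Finset.sum_mul]
            exact Finset.sum_congr rfl fun u₂ _ => by ring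
          · refine Finset.sum_congr rfl fun u₁ _ => ?_
            rw [hqp u₁]
            refine Finset.sum_congr rfl fun u₂ _ => ?_
            show (1/2) * ((1/2) * W (u₁ ^^ u₂) y₁ * W u₂ y₂) *
                logb 2 (((1/2) * V (u₁ ^^ u₂) y₁ * V u₂ y₂) /
                  ((1/2) * Wminus V u₁ (y₁, y₂))) = _
            ring
      _ = ∑ u₁ : Bool, ∑ u₂ : Bool,
            ((1/4) * (W (u₁ ^^ u₂) y₁ * W u₂ y₂) *
              logb 2 (Wminus V u₁ (y₁, y₂) /
                (((1/2) * V false y₁ + (1/2) * V true y₁) * ((1/2) * V false y₂ + (1/2) * V true y₂)))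
            + (1/4) * (W (u₁ ^^ u₂) y₁ * W u₂ y₂) *
              logb 2 (((1/2) * V (u₁ ^^ u₂) y₁ * V u₂ y₂) / ((1/2) * Wminus V u₁ (y₁, y₂)))) := by
          rw [← Finset.sum_add_distrib]
          exact Finset.sum_congr rfl fun u₁ _ => (Finset.sum_add_distrib).symm
      _ = _ := Finset.sum_congr rfl fun u₁ _ => Finset.sum_congr rfl fun u₂ _ => key y₁ y₂ u₁ u₂
  rw [step12]
  set l : Bool → Y → ℝ :=
    fun x y => logb 2 (V x y / ((1/2) * V false y + (1/2) * V true y)) with hl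
  set F : Y → ℝ := fun y => (1/4) * W false y * l false y + (1/4) * W true y * l true y with hF
  have h2 : ∑ y : Y, (W false y + W true y) = 2 := by
    rw [Finset.sum_add_distrib, hW1, hW1]; norm_num
  have hIf : Ifun W V = 2 * ∑ y : Y, F y := by
    rw [Ifun, Finset.mul_sum]
    refine Finset.sum_congr rfl fun y _ => ?_
    simp only [Fintype.sum_bool, hF]
    ring
  calc ∑ y₁ : Y, ∑ y₂ : Y, ∑ u₁ : Bool, ∑ u₂ : Bool,
        (1/4) * (W (u₁ ^^ u₂) y₁ * W u₂ y₂) * (l (u₁ ^^ u₂) y₁ + l u₂ y₂)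
      = ∑ y₁ : Y, ∑ y₂ : Y, (F y₁ * (W false y₂ + W true y₂) + (W false y₁ + W true y₁) * F y₂) := by
        refine Finset.sum_congr rfl fun y₁ _ => Finset.sum_congr rfl fun y₂ _ => ?_
        simp only [Fintype.sum_bool, hF]
        norm_num
        ring
    _ = ∑ y₁ : Y, (F y₁ * 2 + (W false y₁ + W true y₁) * ∑ y₂ : Y, F y₂) := by
        refine Finset.sum_congr rfl fun y₁ _ => ?_
        rw [Finset.sum_add_distrib, ← Finset.mul_sum, ← Finset.mul_sum, h2]
    _ = (∑ y₁ : Y, F y₁) * 2 + 2 * ∑ y₂ : Y, F y₂ := by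
        rw [Finset.sum_add_distrib, ← Finset.sum_mul, ← Finset.sum_mul, h2]
    _ = 2 * Ifun W V := by rw [hIf]; ring


end
end

section
/- For any binary-input discrete memoryless channels W and V with the same output alphabet, I(W, V) ≤ I(W), where I(W) = I(W, W) is the symmetric mutual information of W. Equivalently, mismatched decoding metrics cannot increase the symmetric-information functional. -/
open Finset Real

noncomputable section

/-!
Fix an output `y`. Up to a common positive factor, the `y`-summands of `I(W, V)` and `I(W)`
are `Σₓ p x · logb 2 (q x)` and `Σₓ p x · logb 2 (p x)` for the rescaled posteriors
`p x = 2 W(y|x) / Σ W(y|·)` and `q x = 2 V(y|x) / Σ V(y|·)`. The mass of `q` is at most that of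
`p` (it is zero when `V(y|·)` vanishes, as `x / 0 = 0`), so Gibbs' inequality
`Σ p log q ≤ Σ p log p` compares the two summands output by output.
-/

theorem mul_log_sub_mul_log_le {p q : ℝ} (hp : 0 ≤ p) (hq : 0 ≤ q) (hpq : 0 < p → 0 < q) :
    p * log q - p * log p ≤ q - p := by
  rcases hp.eq_or_lt with rfl | hp
  · simpa using hq
  have hq := hpq hp
  have := log_le_sub_one_of_pos (div_pos hq hp)
  rw [log_div hq.ne' hp.ne'] at this
  calc p * log q - p * log p = p * (log q - log p) := by ring
    _ ≤ p * (q / p - 1) := mul_le_mul_of_nonneg_left this hp.le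
    _ = q - p := by field_simp

theorem sum_mul_logb_le_sum_mul_logb {ι : Type*} [Fintype ι] {b : ℝ} (hb : 1 < b)
    {p q : ι → ℝ} (hp : ∀ i, 0 ≤ p i) (hq : ∀ i, 0 ≤ q i) (hpq : ∀ i, 0 < p i → 0 < q i)
    (hsum : ∑ i, q i ≤ ∑ i, p i) :
    ∑ i, p i * logb b (q i) ≤ ∑ i, p i * logb b (p i) := by
  have hlog : ∑ i, p i * log (q i) ≤ ∑ i, p i * log (p i) := by
    have := Finset.sum_le_sum fun i (_ : i ∈ univ) => mul_log_sub_mul_log_le (hp i) (hq i) (hpq i)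
    rw [Finset.sum_sub_distrib, Finset.sum_sub_distrib] at this
    linarith
  simp only [logb, mul_div_assoc', ← Finset.sum_div]
  exact div_le_div_of_nonneg_right hlog (log_pos hb).le

theorem sum_mul_logb_div_mul_sum_le {ι : Type*} [Fintype ι] {b c : ℝ} (hb : 1 < b)
    (hc : 0 < c) {w v : ι → ℝ} (hw : ∀ i, 0 ≤ w i) (hv : ∀ i, 0 ≤ v i)
    (hwv : ∀ i, 0 < w i → 0 < v i) :
    ∑ i, w i * logb b (v i / (c * ∑ j, v j)) ≤ ∑ i, w i * logb b (w i / (c * ∑ j, w j)) := by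
  set P := c * ∑ j, w j with hPdef
  set Q := c * ∑ j, v j with hQdef
  rcases (Finset.sum_nonneg fun i (_ : i ∈ univ) => hw i).eq_or_lt with hW | hW
  · have hw0 : ∀ i, w i = 0 := fun i =>
      (Finset.sum_eq_zero_iff_of_nonneg fun j _ => hw j).1 hW.symm i (mem_univ i)
    simp [hw0]
  have hP : 0 < P := mul_pos hc hW
  have hQ : 0 ≤ Q := mul_nonneg hc.le (Finset.sum_nonneg fun i _ => hv i)
  have hsupp : ∀ i, 0 < w i / P → 0 < v i / Q := fun i hi => by
    have hvi := hwv i ((div_pos_iff_of_pos_right hP).1 hi)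
    exact div_pos hvi <| mul_pos hc <|
      hvi.trans_le (Finset.single_le_sum (fun j _ => hv j) (mem_univ i))
  have hmass : ∑ i, v i / Q ≤ ∑ i, w i / P := by
    calc ∑ i, v i / Q = (∑ j, v j) / (∑ j, v j) / c := by
          rw [← Finset.sum_div, div_div, hQdef, mul_comm]
      _ ≤ 1 / c := div_le_div_of_nonneg_right (div_self_le_one _) hc.le
      _ = ∑ i, w i / P := by rw [← Finset.sum_div, hPdef]; field_simp
  have hgibbs := sum_mul_logb_le_sum_mul_logb hb (p := fun i => w i / P) (q := fun i => v i / Q)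
    (fun i => div_nonneg (hw i) hP.le) (fun i => div_nonneg (hv i) hQ) hsupp hmass
  have hscaled := mul_le_mul_of_nonneg_left hgibbs hP.le
  simp only [Finset.mul_sum, ← mul_assoc, mul_div_cancel₀ _ hP.ne'] at hscaled
  exact hscaled

theorem Ifun_mismatch_le_matched_general {Y : Type*} [Fintype Y] (W V : Bool → Y → ℝ)
    (hW0 : ∀ x y, 0 ≤ W x y)
    (hV0 : ∀ x y, 0 ≤ V x y)
    (hpos : ∀ x y, 0 < W x y → 0 < V x y) :
    Ifun W V ≤ Ifun W W := by
  have hmean : ∀ (U : Bool → Y → ℝ) y, 1/2 * U false y + 1/2 * U true y = 1/2 * ∑ x, U x y :=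
    fun U y => by rw [Fintype.sum_bool]; ring
  unfold Ifun
  refine Finset.sum_le_sum fun y _ => ?_
  simp only [hmean, mul_assoc, ← Finset.mul_sum]
  exact mul_le_mul_of_nonneg_left (sum_mul_logb_div_mul_sum_le one_lt_two one_half_pos
    (fun x => hW0 x y) (fun x => hV0 x y) (fun x => hpos x y)) one_half_pos.le

/-- `I(W,V) ≤ I(W) = I(W,W)`: a mismatched decoding metric cannot
increase the symmetric-information functional. -/
theorem Ifun_mismatch_le_matched {Y : Type*} [Fintype Y] (W V : Bool → Y → ℝ)
    (hW0 : ∀ x y, 0 ≤ W x y) (hW1 : ∀ x, ∑ y, W x y = 1)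
    (hV0 : ∀ x y, 0 ≤ V x y) (hV1 : ∀ x, ∑ y, V x y = 1)
    (hpos : ∀ x y, 0 < W x y → 0 < V x y) :
    Ifun W V ≤ Ifun W W :=
  Ifun_mismatch_le_matched_general W V hW0 hV0 hpos
end
end

section
/- For the plus polar transform of binary symmetric channels: if W = BSC(ε) and V = BSC(1−ε), then W⁺ ≠ V⁺ (for ε ∉ {0, 1/2, 1}), but (W⁺)⁻ = (V⁺)⁻. More generally, for any sequence s ∈ {+,−}ⁿ other than the all-plus sequence, W^s = V^s. -/
open Finset Real

noncomputable section

/-- Input-flipped channel. -/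
def flipIn {Y : Type*} (W : Bool → Y → ℝ) : Bool → Y → ℝ := fun x y => W (!x) y

lemma BSC_one_sub (ε : ℝ) : BSC (1 - ε) = flipIn (BSC ε) := by
  funext x y
  cases x <;> cases y <;> simp [BSC, flipIn] <;> ring

lemma Wminus_flipIn {Y : Type*} (W : Bool → Y → ℝ) :
    Wminus (flipIn W) = Wminus W := by
  funext u₁ y
  cases u₁ <;>
    simp [Wminus, flipIn, Fintype.sum_bool, add_comm]

lemma Wplus_flipIn {Y : Type*} (W : Bool → Y → ℝ) :
    Wplus (flipIn W) = flipIn (Wplus W) := by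
  funext u₂ y
  obtain ⟨y₁, y₂, u₁⟩ := y
  cases u₁ <;> cases u₂ <;> simp [Wplus, flipIn]

lemma polarChan_flipIn {Y : Type*} (W : Bool → Y → ℝ) (s : List Bool)
    (hs : s ≠ List.replicate s.length true) :
    polarChan (flipIn W) s = polarChan W s := by
  induction s generalizing Y W with
  | nil => simp at hs
  | cons b t ih =>
    cases b with
    | false =>
      show polarChan (Wminus (flipIn W)) t = polarChan (Wminus W) t
      rw [Wminus_flipIn]
    | true =>
      have ht : t ≠ List.replicate t.length true := by
        intro h
        exact hs (by rw [List.length_cons, List.replicate_succ]; exact congrArg _ h)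
      show polarChan (Wplus (flipIn W)) t = polarChan (Wplus W) t
      rw [Wplus_flipIn]; exact ih _ ht

/-- for `W = BSC ε`, `V = BSC (1-ε)` with `ε ∉ {0, 1/2, 1}`:
`W⁺ ≠ V⁺`, but `(W⁺)⁻ = (V⁺)⁻`, and more generally `W^s = V^s` for every
sign sequence `s` other than the all-plus one (`true` = plus). -/
theorem bsc_descendants_coincide_off_all_plus (ε : ℝ)
    (h0 : ε ≠ 0) (hhalf : ε ≠ 1/2) (h1 : ε ≠ 1) :
    Wplus (BSC ε) ≠ Wplus (BSC (1 - ε)) ∧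
    Wminus (Wplus (BSC ε)) = Wminus (Wplus (BSC (1 - ε))) ∧
    ∀ s : List Bool, s ≠ List.replicate s.length true →
      polarChan (BSC ε) s = polarChan (BSC (1 - ε)) s := by
  refine ⟨?_, ?_, ?_⟩
  · intro h
    have := congrFun (congrFun h false) (false, false, false)
    simp [Wplus, BSC] at this
    apply hhalf
    nlinarith [this]
  · rw [BSC_one_sub, Wplus_flipIn, Wminus_flipIn]
  · intro s hs
    rw [BSC_one_sub, polarChan_flipIn _ _ hs]

end
end

section
/- The chain rule for polar transforms of symmetric information holds: for any binary-input channel W with finite output alphabet, I(W⁻) + I(W⁺) = 2·I(W), and moreover I(W⁻) ≤ I(W) ≤ I(W⁺). -/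
open Finset Real

noncomputable section

/-!
Take `U₁, U₂` uniform, `X₁ = U₁ ⊕ U₂`, `X₂ = U₂`, and write `I = H(Y) - H(Y | X)` with entropies
in nats for the uniform input (`outputEntropy`, `condEntropy`). The output of `W⁻` consists of two
independent copies of `Y`, and the output of `W⁺` is that of `W⁻` together with `U₁`; hence
`H(Y₁Y₂) = 2 H(Y)`, `H(Y₁Y₂U₁) = H(Y₁Y₂ | U₁) + log 2` and `H(Y₁Y₂U₁ | U₂) = 2 H(Y | X) + log 2`,
and adding gives the chain rule. By the chain rule the ordering reduces to `I(W) ≤ I(W⁺)`, i.e. to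
`H(Y) + H(Y | X) ≤ H(Y₁Y₂ | U₁)`: given `Y₂`, the law of `Y₁` given `U₁` is a mixture of the rows
of `W`, so concavity of `-t log t` bounds its entropy from below.
-/

theorem Real.negMulLog_half : negMulLog (1/2) = log 2 / 2 := by
  rw [negMulLog, one_div, log_inv]
  ring

theorem Real.sum_mul_negMulLog_sub_le_negMulLog_sum {ι : Type*} (s : Finset ι) {w a : ι → ℝ}
    (hw : ∀ i ∈ s, 0 ≤ w i) (ha : ∀ i ∈ s, 0 ≤ a i) :
    ∑ i ∈ s, w i * negMulLog (a i) - (∑ i ∈ s, w i * a i) * log (∑ i ∈ s, w i)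
      ≤ negMulLog (∑ i ∈ s, w i * a i) := by
  set S := ∑ i ∈ s, w i
  rcases (sum_nonneg hw).eq_or_lt with hS | hS
  · have hw0 : ∀ i ∈ s, w i = 0 := (sum_eq_zero_iff_of_nonneg hw).1 hS.symm
    rw [sum_eq_zero fun i hi => by rw [hw0 i hi, zero_mul],
      sum_eq_zero fun i hi => by rw [hw0 i hi, zero_mul]]
    simp
  have hS0 : S ≠ 0 := hS.ne'
  have hmean : ∑ i ∈ s, w i * a i = S * ∑ i ∈ s, (w i / S) * a i := by
    rw [mul_sum]
    exact sum_congr rfl fun i _ => by field_simp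
  have hscale : ∑ i ∈ s, w i * negMulLog (a i) = S * ∑ i ∈ s, (w i / S) * negMulLog (a i) := by
    rw [mul_sum]
    exact sum_congr rfl fun i _ => by field_simp
  have jensen : ∑ i ∈ s, (w i / S) * negMulLog (a i) ≤ negMulLog (∑ i ∈ s, (w i / S) * a i) :=
    concaveOn_negMulLog.le_map_sum (fun i hi => div_nonneg (hw i hi) hS.le)
      (by rw [← sum_div, div_self hS0]) ha
  rw [hmean, negMulLog_mul, hscale, negMulLog]
  nlinarith [mul_le_mul_of_nonneg_left jensen hS.le]

theorem Real.sum_sum_negMulLog_mul_mul {ι κ : Type*} [Fintype ι] [Fintype κ] (c : ℝ)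
    {a : ι → ℝ} {b : κ → ℝ} (ha : ∑ i, a i = 1) (hb : ∑ j, b j = 1) :
    ∑ i, ∑ j, negMulLog (c * a i * b j)
      = negMulLog c + c * (∑ i, negMulLog (a i) + ∑ j, negMulLog (b j)) := by
  simp only [negMulLog_mul, sum_add_distrib, ← sum_mul, ← mul_sum, ha, hb]
  ring

section
variable {Y : Type*} {W : Bool → Y → ℝ}

def outputDist (W : Bool → Y → ℝ) (y : Y) : ℝ := 1/2 * W false y + 1/2 * W true y

theorem Wminus_nonneg (hW0 : ∀ x y, 0 ≤ W x y) (u : Bool) (y : Y × Y) : 0 ≤ Wminus W u y :=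
  sum_nonneg fun _ _ => mul_nonneg (mul_nonneg (by norm_num) (hW0 _ _)) (hW0 _ _)

theorem Wplus_nonneg (hW0 : ∀ x y, 0 ≤ W x y) (u : Bool) (y : Y × Y × Bool) : 0 ≤ Wplus W u y :=
  mul_nonneg (mul_nonneg (by norm_num) (hW0 _ _)) (hW0 _ _)

theorem sum_Wminus_input (y : Y × Y) :
    ∑ u, Wminus W u y = 2 * (outputDist W y.1 * outputDist W y.2) := by
  simp only [Wminus, outputDist, Fintype.sum_bool, Bool.xor_false, Bool.xor_true, Bool.not_false,
    Bool.not_true]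
  ring

theorem outputDist_Wminus (y : Y × Y) :
    outputDist (Wminus W) y = outputDist W y.1 * outputDist W y.2 := by
  rw [outputDist, ← mul_add, add_comm, ← Fintype.sum_bool (fun u => Wminus W u y),
    sum_Wminus_input]
  ring

theorem outputDist_Wplus (y : Y × Y × Bool) :
    outputDist (Wplus W) y = 1/2 * Wminus W y.2.2 (y.1, y.2.1) := by
  simp only [outputDist, Wplus, Wminus, Fintype.sum_bool]
  cases y.2.2 <;> simp only [Bool.xor_false, Bool.xor_true, Bool.not_false, Bool.not_true] <;> ring

theorem le_negMulLog_Wminus (hW0 : ∀ x y, 0 ≤ W x y) (u : Bool) (y : Y × Y) :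
    ∑ u₂, 1/2 * W u₂ y.2 * negMulLog (W (u ^^ u₂) y.1) - Wminus W u y * log (outputDist W y.2)
      ≤ negMulLog (Wminus W u y) := by
  have hmix : Wminus W u y = ∑ u₂, 1/2 * W u₂ y.2 * W (u ^^ u₂) y.1 :=
    sum_congr rfl fun _ _ => by ring
  have hweight : ∑ u₂, 1/2 * W u₂ y.2 = outputDist W y.2 := by
    rw [Fintype.sum_bool, outputDist, add_comm]
  rw [hmix, ← hweight]
  exact sum_mul_negMulLog_sub_le_negMulLog_sum univ
    (fun _ _ => mul_nonneg (by norm_num) (hW0 _ _)) (fun _ _ => hW0 _ _)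

variable [Fintype Y]

def outputEntropy (W : Bool → Y → ℝ) : ℝ := ∑ y, negMulLog (outputDist W y)

def condEntropy (W : Bool → Y → ℝ) : ℝ := ∑ y, ∑ x : Bool, 1/2 * negMulLog (W x y)

theorem Ifun_self_eq (hW0 : ∀ x y, 0 ≤ W x y) :
    Ifun W W = (outputEntropy W - condEntropy W) / log 2 := by
  show ∑ y, ∑ x : Bool, 1/2 * W x y * logb 2 (W x y / outputDist W y) = _
  rw [outputEntropy, condEntropy, ← sum_sub_distrib, sum_div]
  refine sum_congr rfl fun y _ => ?_
  have hterm : ∀ x, 1/2 * W x y * logb 2 (W x y / outputDist W y)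
      = -(1/2 * negMulLog (W x y) + 1/2 * W x y * log (outputDist W y)) / log 2 := by
    intro x
    rcases (hW0 x y).eq_or_lt with h | h
    · simp [← h]
    have hq : 0 < outputDist W y := by
      have := hW0 false y
      have := hW0 true y
      cases x <;> (unfold outputDist; linarith)
    rw [logb, log_div h.ne' hq.ne', negMulLog]
    ring
  rw [Fintype.sum_bool, Fintype.sum_bool, hterm, hterm, outputDist, negMulLog, negMulLog,
    negMulLog]
  ring

theorem sum_outputDist (hW1 : ∀ x, ∑ y, W x y = 1) : ∑ y, outputDist W y = 1 := by
  simp only [outputDist, sum_add_distrib, ← mul_sum, hW1]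
  norm_num

theorem sum_Wminus (hW1 : ∀ x, ∑ y, W x y = 1) (u : Bool) : ∑ y, Wminus W u y = 1 := by
  simp only [Wminus, Fintype.sum_prod_type, Fintype.sum_bool, sum_add_distrib, ← mul_sum,
    ← sum_mul, hW1]
  norm_num

theorem outputEntropy_Wminus (hW1 : ∀ x, ∑ y, W x y = 1) :
    outputEntropy (Wminus W) = 2 * outputEntropy W := by
  have h := sum_sum_negMulLog_mul_mul 1 (sum_outputDist hW1) (sum_outputDist hW1)
  simp only [one_mul, negMulLog_one, zero_add] at h
  rw [outputEntropy, Fintype.sum_prod_type]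
  simp only [outputDist_Wminus, h, outputEntropy]
  ring

theorem outputEntropy_Wplus (hW1 : ∀ x, ∑ y, W x y = 1) :
    outputEntropy (Wplus W) = condEntropy (Wminus W) + log 2 := by
  have htotal : ∑ y, ∑ u, Wminus W u y = 2 := by
    rw [sum_comm, Fintype.sum_bool, sum_Wminus hW1, sum_Wminus hW1]
    norm_num
  calc outputEntropy (Wplus W) = ∑ y : Y × Y, ∑ u, negMulLog (1/2 * Wminus W u y) := by
        simp only [outputEntropy, outputDist_Wplus, Fintype.sum_prod_type]
    _ = condEntropy (Wminus W) + log 2 := by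
        simp only [negMulLog_mul, sum_add_distrib, ← sum_mul, htotal, negMulLog_half, condEntropy]
        ring

theorem condEntropy_Wplus (hW1 : ∀ x, ∑ y, W x y = 1) :
    condEntropy (Wplus W) = 2 * condEntropy W + log 2 := by
  have hpair : ∀ a b : Bool, ∑ y₁, ∑ y₂, negMulLog (1/2 * W a y₁ * W b y₂)
      = log 2 / 2 + 1/2 * (∑ y, negMulLog (W a y) + ∑ y, negMulLog (W b y)) := fun a b => by
    rw [sum_sum_negMulLog_mul_mul _ (hW1 a) (hW1 b), negMulLog_half]
  calc condEntropy (Wplus W)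
      = ∑ u₁ : Bool, ∑ u₂ : Bool,
          1/2 * ∑ y₁, ∑ y₂, negMulLog (1/2 * W (u₁ ^^ u₂) y₁ * W u₂ y₂) := by
        simp only [condEntropy, Wplus, Fintype.sum_prod_type, Fintype.sum_bool, sum_add_distrib,
          mul_sum]
    _ = 2 * condEntropy W + log 2 := by
        simp only [hpair, condEntropy, Fintype.sum_bool, sum_add_distrib, Bool.xor_false,
          Bool.xor_true, Bool.not_false, Bool.not_true, ← mul_sum]
        ring

theorem outputEntropy_add_condEntropy_le (hW0 : ∀ x y, 0 ≤ W x y) (hW1 : ∀ x, ∑ y, W x y = 1) :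
    outputEntropy W + condEntropy W ≤ condEntropy (Wminus W) := by
  have hcond : ∑ y : Y × Y, ∑ u, 1/2 * ∑ u₂, 1/2 * W u₂ y.2 * negMulLog (W (u ^^ u₂) y.1)
      = condEntropy W := by
    calc _ = ∑ y₁, ∑ y₂, (1/4 * ∑ x, negMulLog (W x y₁)) * (∑ x, W x y₂) := by
          rw [Fintype.sum_prod_type]
          refine sum_congr rfl fun y₁ _ => sum_congr rfl fun y₂ _ => ?_
          simp only [Fintype.sum_bool, Bool.xor_false, Bool.xor_true, Bool.not_false,
            Bool.not_true]
          ring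
      _ = condEntropy W := by
          rw [← sum_mul_sum, condEntropy]
          simp only [Fintype.sum_bool, sum_add_distrib, ← mul_sum, hW1]
          ring
  have hout : ∑ y : Y × Y, ∑ u, 1/2 * (Wminus W u y * log (outputDist W y.2))
      = -outputEntropy W := by
    calc _ = ∑ y₁, ∑ y₂, outputDist W y₁ * (outputDist W y₂ * log (outputDist W y₂)) := by
          rw [Fintype.sum_prod_type]
          refine sum_congr rfl fun y₁ _ => sum_congr rfl fun y₂ _ => ?_
          simp only [← mul_sum, ← sum_mul, sum_Wminus_input]
          ring
      _ = -outputEntropy W := by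
          rw [← sum_mul_sum, sum_outputDist hW1, one_mul, outputEntropy, ← sum_neg_distrib]
          simp only [negMulLog, neg_mul, neg_neg]
  calc outputEntropy W + condEntropy W
      = ∑ y : Y × Y, ∑ u, 1/2 * (∑ u₂, 1/2 * W u₂ y.2 * negMulLog (W (u ^^ u₂) y.1)
          - Wminus W u y * log (outputDist W y.2)) := by
        simp only [mul_sub, sum_sub_distrib, hcond, hout]
        ring
    _ ≤ condEntropy (Wminus W) :=
        sum_le_sum fun y _ => sum_le_sum fun u _ =>
          mul_le_mul_of_nonneg_left (le_negMulLog_Wminus hW0 u y) (by norm_num)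

end

/-- conservation `I(W⁻) + I(W⁺) = 2 I(W)` and the ordering
`I(W⁻) ≤ I(W) ≤ I(W⁺)` for the symmetric information under polar transforms. -/
theorem symmetric_info_polar_chain {Y : Type*} [Fintype Y] (W : Bool → Y → ℝ)
    (hW0 : ∀ x y, 0 ≤ W x y) (hW1 : ∀ x, ∑ y, W x y = 1) :
    Ifun (Wminus W) (Wminus W) + Ifun (Wplus W) (Wplus W) = 2 * Ifun W W ∧
    Ifun (Wminus W) (Wminus W) ≤ Ifun W W ∧
    Ifun W W ≤ Ifun (Wplus W) (Wplus W) := by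
  have hlog2 : 0 < log 2 := log_pos one_lt_two
  rw [Ifun_self_eq (Wminus_nonneg hW0), Ifun_self_eq (Wplus_nonneg hW0), Ifun_self_eq hW0,
    outputEntropy_Wminus hW1, outputEntropy_Wplus hW1, condEntropy_Wplus hW1]
  have hgap := outputEntropy_add_condEntropy_le hW0 hW1
  refine ⟨by field_simp; ring, ?_, ?_⟩ <;>
    exact div_le_div_of_nonneg_right (by linarith) hlog2.le

end
end
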